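/- arXiv:1901.01793 — 2 statements merged into one kernel-verified Lean document; each statement's English description precedes it below -/
import Mathlib

section
/- Let X ~ Gamma(α, 1) with α > 1 (respectively α < 1) and let s ≥ 1 be an integer. Then the failure rate of the s-iterated distribution induced by X, namely the function x ↦ (d/dx)(−log T̄_s(x)), is increasing (respectively decreasing) on (0,∞). -/
open MeasureTheory Set Real

/-- Density of `Gamma(α, 1)` with real shape `α > 0`. -/
noncomputable def gammaDens (a t : ℝ) : ℝ :=
  t ^ (a - 1) * Real.exp (-t) / Real.Gamma a

/-- Tail of the s-iterated distribution induced by a density `g`: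
`T̄_s(x) = E[(X-x)_+^{s-1}] / E[X^{s-1}]`. -/
noncomputable def iterTail (g : ℝ → ℝ) (s : ℕ) (x : ℝ) : ℝ :=
  (∫ t in Set.Ioi x, (t - x) ^ (s - 1) * g t) /
    (∫ t in Set.Ioi (0 : ℝ), t ^ (s - 1) * g t)

/-!
Put `k = s - 1`, `b = α - 1` and `I_{b,k}(x) = ∫₀^∞ u^k (x+u)^b e^{-u} du`. The substitution
`t = x + u` gives `T̄_s(x) = e^{-x} I_{b,k}(x) / Γ(k + α)`, so the failure rate is
`1 - b I_{b-1,k}(x) / I_{b,k}(x)`, and an integration by parts in `u` rewrites it as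
`x^b / I_{b,0}(x)` if `k = 0` and `k I_{b,k-1}(x) / I_{b,k}(x)` if `k ≥ 1`.
For `x < y` the ratio `(x+u)/(y+u)` increases with `u`, so the weights `(x+u)^b` and `(y+u)^b`
are strictly ordered in likelihood ratio, in a direction fixed by the sign of `b`. For `k = 0`
this compares `I_{b,0}(x)/x^b = ∫ (1+u/x)^b e^{-u} du` pointwise; for `k ≥ 1` it orders the
means `I_{b,k}/I_{b,k-1}` by Chebyshev's symmetrisation `∬ (u-v)(F(u)G(v) - F(v)G(u)) ≥ 0`.
-/

open Filter Topology

section SetIntegral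

variable {X : Type*} [MeasurableSpace X] {μ : Measure X} {s : Set X}

theorem setIntegral_pos_of_forall_pos {f : X → ℝ} (hs : MeasurableSet s) (hμs : μ s ≠ 0)
    (hf : IntegrableOn f s μ) (hpos : ∀ x ∈ s, 0 < f x) : 0 < ∫ x in s, f x ∂μ := by
  rw [setIntegral_pos_iff_support_of_nonneg_ae
      ((ae_restrict_mem hs).mono fun x hx => (hpos x hx).le) hf,
    inter_eq_right.mpr fun x hx => Function.mem_support.mpr (hpos x hx).ne', pos_iff_ne_zero]
  exact hμs

theorem setIntegral_lt_setIntegral_of_forall_lt {f g : X → ℝ} (hs : MeasurableSet s)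
    (hμs : μ s ≠ 0) (hf : IntegrableOn f s μ) (hg : IntegrableOn g s μ)
    (hlt : ∀ x ∈ s, f x < g x) : ∫ x in s, f x ∂μ < ∫ x in s, g x ∂μ := by
  have := setIntegral_pos_of_forall_pos (f := fun x => g x - f x) hs hμs (hg.sub hf)
    fun x hx => sub_pos.mpr (hlt x hx)
  rwa [integral_sub hg hf, sub_pos] at this

end SetIntegral

theorem rpow_le_rpow_add_rpow {p q r : ℝ} (c : ℝ) (hp : 0 < p) (hpq : p ≤ q) (hqr : q ≤ r) :
    q ^ c ≤ p ^ c + r ^ c := by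
  rcases le_or_gt 0 c with hc | hc
  · linarith [rpow_le_rpow (hp.le.trans hpq) hqr hc, rpow_nonneg hp.le c]
  · linarith [rpow_le_rpow_of_nonpos hp hpq hc.le, rpow_nonneg (hp.le.trans (hpq.trans hqr)) c]

theorem add_rpow_mul_add_rpow_lt {b x y u v : ℝ} (hb : 0 < b) (hx : 0 < x) (hxy : x < y)
    (hv : 0 ≤ v) (hvu : v < u) : (y + u) ^ b * (x + v) ^ b < (x + u) ^ b * (y + v) ^ b := by
  rw [← mul_rpow (by linarith) (by linarith), ← mul_rpow (by linarith) (by linarith)]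
  exact rpow_lt_rpow (by nlinarith) (by nlinarith) hb

theorem add_rpow_mul_add_rpow_lt_of_neg {b x y u v : ℝ} (hb : b < 0) (hx : 0 < x) (hxy : x < y)
    (hv : 0 ≤ v) (hvu : v < u) : (x + u) ^ b * (y + v) ^ b < (y + u) ^ b * (x + v) ^ b := by
  rw [← mul_rpow (by linarith) (by linarith), ← mul_rpow (by linarith) (by linarith)]
  exact rpow_lt_rpow_of_neg (by nlinarith) (by nlinarith) hb

theorem setIntegral_Ioi_comp_add_right (f : ℝ → ℝ) (a d : ℝ) :
    ∫ u in Ioi a, f (u + d) = ∫ t in Ioi (a + d), f t := by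
  rw [← (measurePreserving_add_right volume d).setIntegral_preimage_emb
    (MeasurableEquiv.addRight d).measurableEmbedding f (Ioi (a + d))]
  congr with u
  simp

theorem moment_mul_integral_lt_of_cross_mul_lt {F G : ℝ → ℝ}
    (hF : IntegrableOn F (Ioi 0)) (hG : IntegrableOn G (Ioi 0))
    (hF₁ : IntegrableOn (fun u => u * F u) (Ioi 0))
    (hG₁ : IntegrableOn (fun u => u * G u) (Ioi 0))
    (hFG : ∀ u v, 0 < v → v < u → F v * G u < F u * G v) :
    (∫ u in Ioi 0, u * G u) * (∫ u in Ioi 0, F u) <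
      (∫ u in Ioi 0, u * F u) * ∫ u in Ioi 0, G u := by
  set ν := volume.restrict (Ioi (0 : ℝ))
  set H : ℝ × ℝ → ℝ := fun z => (z.1 - z.2) * (F z.1 * G z.2 - F z.2 * G z.1)
  -- `H ≥ 0` because `F / G` increases, and `∫ H` is twice the difference of the two sides
  have hH_eq : H = fun z => (z.1 * F z.1 * G z.2 - z.1 * G z.1 * F z.2) +
      (G z.1 * (z.2 * F z.2) - F z.1 * (z.2 * G z.2)) := by
    ext z
    ring
  have hH_int : Integrable H (ν.prod ν) := by
    rw [hH_eq]
    exact ((hF₁.mul_prod hG).sub (hG₁.mul_prod hF)).add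
      ((hG.mul_prod hF₁).sub (hF.mul_prod hG₁))
  have hH_integral : ∫ z, H z ∂ν.prod ν =
      2 * ((∫ u in Ioi 0, u * F u) * (∫ u in Ioi 0, G u) -
        (∫ u in Ioi 0, u * G u) * ∫ u in Ioi 0, F u) := by
    rw [hH_eq, integral_add ?_ ?_, integral_sub ?_ ?_, integral_sub ?_ ?_,
      integral_prod_mul (fun u => u * F u) G, integral_prod_mul (fun u => u * G u) F,
      integral_prod_mul G (fun u => u * F u), integral_prod_mul F (fun u => u * G u)]
    · ring
    exacts [hG.mul_prod hF₁, hF.mul_prod hG₁, hF₁.mul_prod hG, hG₁.mul_prod hF,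
      (hF₁.mul_prod hG).sub (hG₁.mul_prod hF), (hG.mul_prod hF₁).sub (hF.mul_prod hG₁)]
  have hH_nonneg : ∀ z ∈ Ioi (0 : ℝ) ×ˢ Ioi 0, 0 ≤ H z := by
    rintro ⟨u, v⟩ ⟨hu, hv⟩
    rcases lt_trichotomy v u with hvu | rfl | huv
    · exact mul_nonneg (by linarith) (by linarith [hFG u v hv hvu])
    · simp [H]
    · exact mul_nonneg_of_nonpos_of_nonpos (by linarith) (by linarith [hFG v u hu huv])
  have hH_pos : 0 < ∫ z, H z ∂ν.prod ν := by
    have hrect : Ioo (1 : ℝ) 2 ×ˢ Ioo (0 : ℝ) 1 ⊆ Ioi 0 ×ˢ Ioi 0 :=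
      Set.prod_mono (Ioo_subset_Ioi_self.trans (Ioi_subset_Ioi zero_le_one)) Ioo_subset_Ioi_self
    rw [Measure.prod_restrict, ← Measure.volume_eq_prod] at hH_int ⊢
    calc (0 : ℝ) < ∫ z in Ioo 1 2 ×ˢ Ioo 0 1, H z := by
          refine setIntegral_pos_of_forall_pos (measurableSet_Ioo.prod measurableSet_Ioo)
            (by simp [Measure.volume_eq_prod, Measure.prod_prod]) ?_ ?_
          · exact IntegrableOn.mono_set hH_int hrect
          · rintro ⟨u, v⟩ ⟨⟨hu, hu'⟩, hv, hv'⟩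
            exact mul_pos (by linarith) (by linarith [hFG u v hv (by linarith)])
      _ ≤ ∫ z in Ioi 0 ×ˢ Ioi 0, H z := by
          exact setIntegral_mono_set hH_int
            ((ae_restrict_mem (measurableSet_Ioi.prod measurableSet_Ioi)).mono hH_nonneg)
            hrect.eventuallyLE
  linarith

noncomputable def shiftedGammaIntegral (b : ℝ) (k : ℕ) (x : ℝ) : ℝ :=
  ∫ u in Ioi 0, u ^ k * (x + u) ^ b * exp (-u)

section ShiftedGammaIntegral

variable {x : ℝ}

theorem tendsto_pow_mul_add_rpow_mul_exp_neg_mul_atTop (b : ℝ) {c : ℝ} (hc : 0 < c) (k : ℕ)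
    (x : ℝ) : Tendsto (fun u : ℝ => u ^ k * (x + u) ^ b * exp (-(c * u))) atTop (𝓝 0) := by
  have hpow : Tendsto (fun u : ℝ => u ^ (k : ℝ) * exp (-(c / 2) * u)) atTop (𝓝 0) :=
    tendsto_rpow_mul_exp_neg_mul_atTop_nhds_zero _ _ (by positivity)
  have hshift : Tendsto (fun u : ℝ => (x + u) ^ b * exp (-(c / 2) * (x + u))) atTop (𝓝 0) :=
    (tendsto_rpow_mul_exp_neg_mul_atTop_nhds_zero b _ (by positivity)).comp
      (tendsto_atTop_add_const_left atTop x tendsto_id)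
  have h := hpow.mul (hshift.const_mul (exp (c / 2 * x)))
  rw [mul_zero, zero_mul] at h
  refine h.congr fun u => ?_
  rw [rpow_natCast, show -(c * u) = -(c / 2) * u + (c / 2 * x + -(c / 2) * (x + u)) by ring,
    exp_add, exp_add]
  ring

theorem continuousOn_pow_mul_add_rpow_mul_exp_neg (b : ℝ) (k : ℕ) (hx : 0 < x) :
    ContinuousOn (fun u : ℝ => u ^ k * (x + u) ^ b * exp (-u)) (Ici 0) :=
  ((continuous_pow k).continuousOn.mul
    (ContinuousOn.rpow_const (by fun_prop) fun u (hu : 0 ≤ u) => Or.inl (by positivity))).mul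
    (by fun_prop)

theorem integrableOn_pow_mul_add_rpow_mul_exp_neg (b : ℝ) (k : ℕ) (hx : 0 < x) :
    IntegrableOn (fun u : ℝ => u ^ k * (x + u) ^ b * exp (-u)) (Ioi 0) := by
  refine integrable_of_isBigO_exp_neg one_half_pos
    (continuousOn_pow_mul_add_rpow_mul_exp_neg b k hx) ?_
  have h := ((tendsto_pow_mul_add_rpow_mul_exp_neg_mul_atTop b one_half_pos k x).isBigO_one ℝ).mul
    (Asymptotics.isBigO_refl (fun u : ℝ => exp (-(1 / 2) * u)) atTop)
  refine (h.congr_left fun u => ?_).congr_right fun u => one_mul _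
  rw [mul_assoc, ← exp_add]
  ring_nf

theorem shiftedGammaIntegral_pos (b : ℝ) (k : ℕ) (hx : 0 < x) :
    0 < shiftedGammaIntegral b k x :=
  setIntegral_pos_of_forall_pos measurableSet_Ioi (by simp)
    (integrableOn_pow_mul_add_rpow_mul_exp_neg b k hx) fun u (hu : 0 < u) => by positivity

theorem hasDerivAt_shiftedGammaIntegral (b : ℝ) (k : ℕ) (hx : 0 < x) :
    HasDerivAt (shiftedGammaIntegral b k) (b * shiftedGammaIntegral (b - 1) k x) x := by
  have hint {z : ℝ} (hz : 0 < z) := integrableOn_pow_mul_add_rpow_mul_exp_neg (b - 1) k hz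
  have hnhds : Ioo (x / 2) (2 * x) ∈ 𝓝 x := Ioo_mem_nhds (by linarith) (by linarith)
  have hbound : ∀ᵐ u ∂volume.restrict (Ioi 0), ∀ y ∈ Ioo (x / 2) (2 * x),
      ‖b * (u ^ k * (y + u) ^ (b - 1) * exp (-u))‖ ≤ |b| *
        (u ^ k * (x / 2 + u) ^ (b - 1) * exp (-u) + u ^ k * (2 * x + u) ^ (b - 1) * exp (-u)) := by
    filter_upwards [ae_restrict_mem measurableSet_Ioi] with u (hu : 0 < u) y ⟨hxy, hyx⟩
    have hy : 0 < y := by linarith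
    calc ‖b * (u ^ k * (y + u) ^ (b - 1) * exp (-u))‖
        = |b| * (u ^ k * (y + u) ^ (b - 1) * exp (-u)) := by
          rw [norm_mul, norm_eq_abs, norm_of_nonneg (by positivity)]
      _ ≤ |b| * (u ^ k * ((x / 2 + u) ^ (b - 1) + (2 * x + u) ^ (b - 1)) * exp (-u)) := by
          gcongr
          exact rpow_le_rpow_add_rpow _ (by linarith) (by linarith) (by linarith)
      _ = _ := by ring
  have hderiv : ∀ᵐ u ∂volume.restrict (Ioi 0), ∀ y ∈ Ioo (x / 2) (2 * x),
      HasDerivAt (fun y => u ^ k * (y + u) ^ b * exp (-u))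
        (b * (u ^ k * (y + u) ^ (b - 1) * exp (-u))) y := by
    filter_upwards [ae_restrict_mem measurableSet_Ioi] with u (hu : 0 < u) y hy
    have hyu : y + u ≠ 0 := by linarith [hy.1]
    refine ((((hasDerivAt_id y).add_const u).rpow_const (Or.inl hyu)).const_mul (u ^ k)
      |>.mul_const (exp (-u))).congr_deriv ?_
    simp only [id]
    ring
  have h := (hasDerivAt_integral_of_dominated_loc_of_deriv_le
    (F := fun y u => u ^ k * (y + u) ^ b * exp (-u)) hnhds
    (eventually_of_mem hnhds fun y hy =>
      (integrableOn_pow_mul_add_rpow_mul_exp_neg b k (by linarith [hy.1])).aestronglyMeasurable)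
    (integrableOn_pow_mul_add_rpow_mul_exp_neg b k hx)
    ((hint hx).const_mul b).aestronglyMeasurable hbound
    (((hint (by linarith)).add (hint (by linarith))).const_mul |b|) hderiv).2
  rwa [integral_const_mul] at h

theorem mul_shiftedGammaIntegral_sub_one (b : ℝ) (k : ℕ) (hx : 0 < x) :
    b * shiftedGammaIntegral (b - 1) k x =
      shiftedGammaIntegral b k x - k * shiftedGammaIntegral b (k - 1) x - 0 ^ k * x ^ b := by
  have hderiv : ∀ u ∈ Ici (0 : ℝ), HasDerivAt (fun u => u ^ k * (x + u) ^ b * exp (-u))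
      (k * (u ^ (k - 1) * (x + u) ^ b * exp (-u)) + b * (u ^ k * (x + u) ^ (b - 1) * exp (-u)) -
        u ^ k * (x + u) ^ b * exp (-u)) u := by
    intro u (hu : 0 ≤ u)
    have hxu : x + u ≠ 0 := by linarith
    refine (((hasDerivAt_pow k u).mul (((hasDerivAt_id u).const_add x).rpow_const
      (Or.inl hxu))).mul (hasDerivAt_neg u).exp).congr_deriv ?_
    simp only [id, Pi.mul_apply]
    ring
  have hlim : Tendsto (fun u => u ^ k * (x + u) ^ b * exp (-u)) atTop (𝓝 0) := by
    simpa only [one_mul] using tendsto_pow_mul_add_rpow_mul_exp_neg_mul_atTop b one_pos k x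
  have hint {c : ℝ} (j : ℕ) := integrableOn_pow_mul_add_rpow_mul_exp_neg c j hx
  have h1 : IntegrableOn (fun u => (k : ℝ) * (u ^ (k - 1) * (x + u) ^ b * exp (-u))) (Ioi 0) :=
    (hint _).const_mul _
  have h2 : IntegrableOn (fun u => b * (u ^ k * (x + u) ^ (b - 1) * exp (-u))) (Ioi 0) :=
    (hint _).const_mul _
  have h := integral_Ioi_of_hasDerivAt_of_tendsto' hderiv ((h1.add h2).sub (hint k)) hlim
  rw [integral_sub ?_ (hint k), integral_add h1 h2, integral_const_mul, integral_const_mul] at h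
  · simp only [add_zero, neg_zero, exp_zero, mul_one] at h
    unfold shiftedGammaIntegral
    linarith
  · exact h1.add h2

theorem shiftedGammaIntegral_succ (b : ℝ) (k : ℕ) (x : ℝ) :
    shiftedGammaIntegral b (k + 1) x = ∫ u in Ioi 0, u * (u ^ k * (x + u) ^ b * exp (-u)) := by
  simp only [shiftedGammaIntegral, pow_succ', mul_assoc]

end ShiftedGammaIntegral

-- For `b = a - 1` and `k = s - 1` this is the failure rate of the `s`-iterated `Gamma(a, 1)`
-- distribution; the boundary term `0 ^ k * x ^ b` survives only for `k = 0`.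
noncomputable def shiftedGammaHazard (b : ℝ) (k : ℕ) (x : ℝ) : ℝ :=
  (k * shiftedGammaIntegral b (k - 1) x + 0 ^ k * x ^ b) / shiftedGammaIntegral b k x

theorem shiftedGammaHazard_lt {b x y : ℝ} (k : ℕ) (hx : 0 < x) (hy : 0 < y)
    (hxy : ∀ u v, 0 ≤ v → v < u → (y + u) ^ b * (x + v) ^ b < (x + u) ^ b * (y + v) ^ b) :
    shiftedGammaHazard b k x < shiftedGammaHazard b k y := by
  have hint {z : ℝ} (hz : 0 < z) (j : ℕ) := integrableOn_pow_mul_add_rpow_mul_exp_neg b j hz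
  rw [shiftedGammaHazard, shiftedGammaHazard, div_lt_div_iff₀ (shiftedGammaIntegral_pos b k hx)
    (shiftedGammaIntegral_pos b k hy)]
  cases k with
  | zero =>
    simp only [Nat.cast_zero, zero_mul, pow_zero, one_mul, zero_add]
    rw [shiftedGammaIntegral, shiftedGammaIntegral, ← integral_const_mul, ← integral_const_mul]
    refine setIntegral_lt_setIntegral_of_forall_lt measurableSet_Ioi (by simp)
      ((hint hy 0).const_mul _) ((hint hx 0).const_mul _) fun u (hu : 0 < u) => ?_
    have h := mul_lt_mul_of_pos_right (hxy u 0 le_rfl hu) (exp_pos (-u))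
    simp only [add_zero] at h
    linarith
  | succ m =>
    simp only [Nat.add_sub_cancel, ne_eq, Nat.add_one_ne_zero, not_false_eq_true, zero_pow,
      zero_mul, add_zero]
    have h : shiftedGammaIntegral b (m + 1) y * shiftedGammaIntegral b m x <
        shiftedGammaIntegral b (m + 1) x * shiftedGammaIntegral b m y := by
      rw [shiftedGammaIntegral_succ, shiftedGammaIntegral_succ]
      refine moment_mul_integral_lt_of_cross_mul_lt (hint hx m) (hint hy m)
        (by simpa only [pow_succ', mul_assoc] using hint hx (m + 1))
        (by simpa only [pow_succ', mul_assoc] using hint hy (m + 1)) fun u v hv hvu => ?_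
      have hu : 0 < u := hv.trans hvu
      have h := mul_lt_mul_of_pos_left (hxy u v hv.le hvu)
        (by positivity : 0 < v ^ m * u ^ m * exp (-v) * exp (-u))
      linarith
    have hm : (0 : ℝ) < (m + 1 : ℕ) := by positivity
    linarith [mul_lt_mul_of_pos_left h hm]

theorem setIntegral_Ioi_sub_pow_mul_gammaDens (a x : ℝ) (k : ℕ) :
    ∫ t in Ioi x, (t - x) ^ k * gammaDens a t =
      exp (-x) / Gamma a * shiftedGammaIntegral (a - 1) k x := by
  rw [← zero_add x, ← setIntegral_Ioi_comp_add_right, zero_add, shiftedGammaIntegral,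
    ← integral_const_mul]
  congr with u
  rw [gammaDens, add_sub_cancel_right, add_comm u x, neg_add, exp_add]
  ring

theorem setIntegral_pow_mul_gammaDens {a : ℝ} (ha : 0 < a) (k : ℕ) :
    ∫ t in Ioi 0, t ^ k * gammaDens a t = Gamma (k + a) / Gamma a := by
  rw [Gamma_eq_integral (by positivity), ← integral_div]
  refine setIntegral_congr_fun measurableSet_Ioi fun t (ht : 0 < t) => ?_
  rw [gammaDens, add_sub_assoc, rpow_add ht, rpow_natCast]
  ring

theorem iterTail_gammaDens {a : ℝ} (ha : 0 < a) (s : ℕ) (x : ℝ) :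
    iterTail (gammaDens a) s x =
      exp (-x) * shiftedGammaIntegral (a - 1) (s - 1) x / Gamma ((s - 1 : ℕ) + a) := by
  rw [iterTail, setIntegral_Ioi_sub_pow_mul_gammaDens, setIntegral_pow_mul_gammaDens ha]
  field_simp [(Gamma_pos_of_pos ha).ne']

theorem deriv_neg_log_iterTail_gammaDens {a x : ℝ} (ha : 0 < a) (s : ℕ) (hx : 0 < x) :
    deriv (fun y => -log (iterTail (gammaDens a) s y)) x =
      shiftedGammaHazard (a - 1) (s - 1) x := by
  set k := s - 1
  have hI := shiftedGammaIntegral_pos (a - 1) k hx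
  have hlog : (fun y => -log (iterTail (gammaDens a) s y)) =ᶠ[𝓝 x]
      fun y => y - log (shiftedGammaIntegral (a - 1) k y) + log (Gamma (k + a)) := by
    filter_upwards [Ioi_mem_nhds hx] with y (hy : 0 < y)
    have := shiftedGammaIntegral_pos (a - 1) k hy
    have := Gamma_pos_of_pos (by positivity : 0 < (k : ℝ) + a)
    rw [iterTail_gammaDens ha, log_div (by positivity) (by positivity),
      log_mul (by positivity) (by positivity), log_exp]
    ring
  have hderiv : HasDerivAt
      (fun y => y - log (shiftedGammaIntegral (a - 1) k y) + log (Gamma (k + a)))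
      (1 - (a - 1) * shiftedGammaIntegral (a - 1 - 1) k x / shiftedGammaIntegral (a - 1) k x) x :=
    ((hasDerivAt_id' x).sub ((hasDerivAt_shiftedGammaIntegral (a - 1) k hx).log hI.ne')).add_const _
  rw [hlog.deriv_eq, hderiv.deriv, shiftedGammaHazard, mul_shiftedGammaIntegral_sub_one _ _ hx]
  field_simp
  ring

theorem iterated_gamma_failure_rate_monotone_general (a : ℝ) (ha : 0 < a) (s : ℕ) :
    (1 < a → StrictMonoOn
      (fun x => deriv (fun y => -Real.log (iterTail (gammaDens a) s y)) x) (Ioi 0)) ∧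
    (a < 1 → StrictAntiOn
      (fun x => deriv (fun y => -Real.log (iterTail (gammaDens a) s y)) x) (Ioi 0)) := by
  refine ⟨fun ha₁ x (hx : 0 < x) y (hy : 0 < y) hxy => ?_,
    fun ha₁ x (hx : 0 < x) y (hy : 0 < y) hxy => ?_⟩
  · simp only [deriv_neg_log_iterTail_gammaDens ha s hx, deriv_neg_log_iterTail_gammaDens ha s hy]
    exact shiftedGammaHazard_lt _ hx hy fun u v hv hvu =>
      add_rpow_mul_add_rpow_lt (by linarith) hx hxy hv hvu
  · simp only [deriv_neg_log_iterTail_gammaDens ha s hx, deriv_neg_log_iterTail_gammaDens ha s hy]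
    exact shiftedGammaHazard_lt _ hy hx fun u v hv hvu =>
      add_rpow_mul_add_rpow_lt_of_neg (by linarith) hx hxy hv hvu

/-- For `X ~ Gamma(α, 1)`, the failure rate `x ↦ (d/dx)(−log T̄_s(x))` of the s-iterated
distribution is increasing when `α > 1` and decreasing when `α < 1`. -/
theorem iterated_gamma_failure_rate_monotone (a : ℝ) (ha : 0 < a) (s : ℕ) (hs : 1 ≤ s) :
    (1 < a → StrictMonoOn
      (fun x => deriv (fun y => -Real.log (iterTail (gammaDens a) s y)) x) (Ioi 0)) ∧
    (a < 1 → StrictAntiOn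
      (fun x => deriv (fun y => -Real.log (iterTail (gammaDens a) s y)) x) (Ioi 0)) :=
  iterated_gamma_failure_rate_monotone_general a ha s
end

section
/- Let X ~ Gamma(α, 1) with α > 0. For every s ≥ 1 and x ≥ 0, the iterated tails satisfy the recursion T̄^{α+1}_{s+1}(x) = (s/(α+s)) T̄^{α+1}_s(x) + (α/(α+s)) T̄^{α}_{s+1}(x), where T̄^{β}_s denotes the s-iterated tail induced by a Gamma(β, 1) random variable. -/
/-!
The function `t ↦ (t - x) ^ s * t ^ a * e^{-t}` vanishes at `t = x` and at infinity, so the integral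
of its derivative over `(x, ∞)` is zero. This is the identity
`∫ (t-x)^s t^a e^{-t} = s ∫ (t-x)^(s-1) t^a e^{-t} + a ∫ (t-x)^s t^(a-1) e^{-t}`,
and dividing it by `Γ(a + s + 1) = (a + s) Γ(a + s)` gives the recursion.
-/

open MeasureTheory Set Real Filter Topology

/-- Tail of the s-iterated distribution induced by `Gamma(β, 1)`:
`T̄^β_s(x) = (1/Γ(β+s-1)) ∫_x^∞ (t-x)^{s-1} t^{β-1} e^{-t} dt`. -/
noncomputable def gammaIterTail (b : ℝ) (s : ℕ) (x : ℝ) : ℝ :=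
  (∫ t in Set.Ioi x, (t - x) ^ (s - 1) * (t ^ (b - 1) * Real.exp (-t))) /
    Real.Gamma (b + (s : ℝ) - 1)

noncomputable def tailMomentIntegral (c : ℝ) (k : ℕ) (x : ℝ) : ℝ :=
  ∫ t in Ioi x, (t - x) ^ k * (t ^ c * exp (-t))

lemma gammaIterTail_succ (b : ℝ) (k : ℕ) (x : ℝ) :
    gammaIterTail b (k + 1) x = tailMomentIntegral (b - 1) k x / Gamma (b + k) := by
  simp only [gammaIterTail, tailMomentIntegral, Nat.add_sub_cancel, Nat.cast_succ, ← add_assoc,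
    add_sub_cancel_right]

lemma sub_pow_mul_rpow_mul_exp_neg_le (k : ℕ) (c : ℝ) {x t : ℝ} (hx : 0 ≤ x) (hxt : x < t) :
    (t - x) ^ k * (t ^ c * exp (-t)) ≤ t ^ ((k : ℝ) + c) * exp (-t) := by
  have ht : 0 < t := hx.trans_lt hxt
  rw [rpow_add ht, rpow_natCast, mul_assoc]
  gcongr
  linarith

lemma integrableOn_sub_pow_mul_rpow_mul_exp_neg (k : ℕ) {c x : ℝ} (hc : -1 < c) (hx : 0 ≤ x) :
    IntegrableOn (fun t => (t - x) ^ k * (t ^ c * exp (-t))) (Ioi x) := by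
  have hdom : IntegrableOn (fun t => t ^ ((k : ℝ) + c) * exp (-t)) (Ioi x) := by
    have hΓ := GammaIntegral_convergent (s := (k : ℝ) + c + 1) (by linarith [k.cast_nonneg (α := ℝ)])
    simp only [add_sub_cancel_right] at hΓ
    exact (hΓ.mono_set (Ioi_subset_Ioi hx)).congr_fun (fun t _ => mul_comm _ _) measurableSet_Ioi
  refine hdom.mono' (by fun_prop) ?_
  filter_upwards [ae_restrict_mem measurableSet_Ioi] with t (hxt : x < t)
  have ht : 0 ≤ t := hx.trans hxt.le
  rw [norm_of_nonneg (by have := sub_nonneg.2 hxt.le; positivity)]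
  exact sub_pow_mul_rpow_mul_exp_neg_le k c hx hxt

lemma tendsto_sub_pow_mul_rpow_mul_exp_neg_atTop (k : ℕ) (c : ℝ) {x : ℝ} (hx : 0 ≤ x) :
    Tendsto (fun t => (t - x) ^ k * (t ^ c * exp (-t))) atTop (𝓝 0) := by
  have hdom := tendsto_rpow_mul_exp_neg_mul_atTop_nhds_zero ((k : ℝ) + c) 1 one_pos
  simp only [neg_one_mul] at hdom
  refine squeeze_zero' ?_ ?_ hdom
  · filter_upwards [eventually_ge_atTop x] with t hxt
    have ht : 0 ≤ t := hx.trans hxt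
    have := sub_nonneg.2 hxt
    positivity
  · filter_upwards [eventually_gt_atTop x] with t hxt
    exact sub_pow_mul_rpow_mul_exp_neg_le k c hx hxt

lemma hasDerivAt_sub_pow_succ_mul_rpow_mul_exp_neg (k : ℕ) (c x : ℝ) {t : ℝ} (ht : t ≠ 0) :
    HasDerivAt (fun t => (t - x) ^ (k + 1) * (t ^ c * exp (-t)))
      ((k + 1) * ((t - x) ^ k * (t ^ c * exp (-t)))
        + c * ((t - x) ^ (k + 1) * (t ^ (c - 1) * exp (-t)))
        - (t - x) ^ (k + 1) * (t ^ c * exp (-t))) t := by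
  have hpow := ((hasDerivAt_id' t).sub_const x).fun_pow (k + 1)
  have hrpow := hasDerivAt_rpow_const (p := c) (Or.inl ht)
  have hexp := (hasDerivAt_neg t).exp
  refine (hpow.fun_mul (hrpow.fun_mul hexp)).congr_deriv ?_
  push_cast
  ring

lemma tailMomentIntegral_succ {a x : ℝ} (ha : 0 < a) (k : ℕ) (hx : 0 ≤ x) :
    tailMomentIntegral a (k + 1) x
      = (k + 1) * tailMomentIntegral a k x + a * tailMomentIntegral (a - 1) (k + 1) x := by
  have hI₁ := integrableOn_sub_pow_mul_rpow_mul_exp_neg k (c := a) (by linarith) hx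
  have hI₂ := integrableOn_sub_pow_mul_rpow_mul_exp_neg (k + 1) (c := a - 1) (by linarith) hx
  have hI₃ := integrableOn_sub_pow_mul_rpow_mul_exp_neg (k + 1) (c := a) (by linarith) hx
  have hcont : ContinuousWithinAt (fun t => (t - x) ^ (k + 1) * (t ^ a * exp (-t))) (Ici x) x :=
    (((continuous_id.sub continuous_const).pow _).mul
      ((continuous_id.rpow_const fun _ => Or.inr ha.le).mul
        (continuous_neg.rexp))).continuousWithinAt
  have hFTC := integral_Ioi_of_hasDerivAt_of_tendsto hcont
    (fun t (hxt : x < t) =>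
      hasDerivAt_sub_pow_succ_mul_rpow_mul_exp_neg k a x (hx.trans_lt hxt).ne')
    (((hI₁.const_mul _).add (hI₂.const_mul _)).sub hI₃)
    (tendsto_sub_pow_mul_rpow_mul_exp_neg_atTop (k + 1) a hx)
  rw [integral_sub ?_ hI₃, integral_add (hI₁.const_mul _) (hI₂.const_mul _), integral_const_mul,
    integral_const_mul, sub_self, zero_pow k.succ_ne_zero, zero_mul, sub_zero] at hFTC
  · unfold tailMomentIntegral
    linarith
  · exact (hI₁.const_mul _).add (hI₂.const_mul _)

/-- Recursion between iterated Gamma tails: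
`T̄^{α+1}_{s+1}(x) = (s/(α+s)) T̄^{α+1}_s(x) + (α/(α+s)) T̄^{α}_{s+1}(x)`. -/
theorem gamma_iterated_tail_recursion (a : ℝ) (ha : 0 < a) (s : ℕ) (hs : 1 ≤ s)
    (x : ℝ) (hx : 0 ≤ x) :
    gammaIterTail (a + 1) (s + 1) x
      = ((s : ℝ) / (a + s)) * gammaIterTail (a + 1) s x
        + (a / (a + s)) * gammaIterTail a (s + 1) x := by
  obtain ⟨k, rfl⟩ := Nat.exists_eq_add_of_le' hs
  have has : 0 < a + k + 1 := by positivity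
  rw [gammaIterTail_succ, gammaIterTail_succ, gammaIterTail_succ, add_sub_cancel_right,
    tailMomentIntegral_succ ha k hx]
  push_cast
  rw [show a + 1 + (k + 1) = a + k + 1 + 1 by ring, show a + 1 + k = a + k + 1 by ring,
    show a + (k + 1) = a + k + 1 by ring, Gamma_add_one has.ne']
  have hΓ := Gamma_pos_of_pos has
  field_simp
end
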